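/- Let θ be an inner function. Every element f of the space X can be represented as a linear combination f = f₁ − f₂ + i f₃ − i f₄ of four nonnegative elements f₁, f₂, f₃, f₄ of X; moreover each fⱼ can be taken with ‖fⱼ‖_X ≤ ‖f‖_X. -/

import Mathlib

/-!
Take a representation `f = ∑ x_k ȳ_k` rescaled so that `‖x_k‖₂ = ‖y_k‖₂`. For a fourth root of
unity `c`, the functions `u_k = (x_k + c y_k) / 2` give the nonnegative element
`f_c = ∑ |u_k|²` of `X`, with `‖f_c‖_X ≤ ∑ ‖u_k‖₂² = (∑ ‖x_k‖₂ ‖y_k‖₂ + Re (c̄ ∫ f)) / 2`, and the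
polarization identity `x ȳ = ∑_c c |(x + c y) / 2|²` gives `f = f_1 - f_{-1} + i f_i - i f_{-i}`.
Since `∫ |f| ≤ ‖f‖_X`, the bound is at most `‖f‖_X` as soon as the representation is optimal up
to less than the defect `∫ |f| - Re (c̄ ∫ f)`. If that defect vanishes for some `c`, then
`c̄ f ≥ 0` a.e. and `f = c (c̄ f)` is a decomposition by itself.
-/

open MeasureTheory Complex Filter

noncomputable section
open scoped Classical

/-- The unit circle `𝕋` in `ℂ`. -/
def sphere1 : Set ℂ := Metric.sphere (0 : ℂ) 1

/-- Normalized Lebesgue (arc-length) measure `m` on the unit circle,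
as a Borel measure on `ℂ`. -/
def mT : MeasureTheory.Measure ℂ :=
  (ENNReal.ofReal (2 * Real.pi)⁻¹) •
    MeasureTheory.Measure.map (fun t : ℝ => Complex.exp (t * Complex.I))
      (MeasureTheory.volume.restrict (Set.Ioc 0 (2 * Real.pi)))

/-- Vanishing of all Fourier coefficients of negative index: the defining property of
(boundary values of) Hardy space functions. -/
def NegCoeffVanish (f : ℂ → ℂ) : Prop :=
  ∀ n : ℕ, 1 ≤ n → ∫ z, f z * z ^ n ∂mT = 0

/-- `θ` is (the boundary-value function of) an inner function: it is in `H^∞` and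
has unimodular boundary values `m`-a.e. -/
structure IsInner (θ : ℂ → ℂ) : Prop where
  meas : AEStronglyMeasurable θ mT
  hardy : NegCoeffVanish θ
  unimod : ∀ᵐ z ∂mT, ‖θ z‖ = 1

/-- Membership in the model (star-invariant) space `K_θ^p = H^p ∩ θ H^p₋`,
described via boundary values: `f ∈ L^p`, `f ∈ H^p`, and `θ z̄ f̄ ∈ H^p`. -/
def MemK (p : ENNReal) (θ f : ℂ → ℂ) : Prop :=
  MemLp f p mT ∧ NegCoeffVanish f ∧
    NegCoeffVanish (fun z => θ z * (starRingEnd ℂ) (z * f z))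

/-- The `L²(m)` norm of a boundary function, as a real number. -/
def norm2 (f : ℂ → ℂ) : ℝ := (eLpNorm f 2 mT).toReal

/-- The `L²(m)` pairing `(f, g) = ∫ f ḡ dm`. -/
def ip (f g : ℂ → ℂ) : ℂ := ∫ z, f z * (starRingEnd ℂ) (g z) ∂mT

/-- `L²` of the circle. -/
abbrev L2T := MeasureTheory.Lp ℂ 2 mT

/-- `K_θ = K_θ²` as a subset of `L²` of the circle. -/
def Kset (θ : ℂ → ℂ) : Set L2T := {f | MemK 2 θ ⇑f}

/-- `A` is a bounded operator "on `K_θ`": it maps `K_θ` into itself and vanishes on the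
orthogonal complement of `K_θ` (so that it is determined by its restriction to `K_θ`). -/
def OpOnK (θ : ℂ → ℂ) (A : L2T →L[ℂ] L2T) : Prop :=
  (∀ f ∈ Kset θ, A f ∈ Kset θ) ∧
    ∀ f : L2T, (∀ g ∈ Kset θ, ip ⇑f ⇑g = 0) → A f = 0

/-- `φ` is a symbol of the operator `A` on `K_θ`: `(A f, g) = (φ f, g)` for all bounded
`f ∈ K_θ` and all `g ∈ K_θ`, i.e. `A f = P_θ (φ f)`. -/
def IsSymbolOf (θ : ℂ → ℂ) (A : L2T →L[ℂ] L2T) (φ : ℂ → ℂ) : Prop :=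
  ∀ f g : L2T, f ∈ Kset θ → g ∈ Kset θ → (∃ C : ℝ, ∀ᵐ z ∂mT, ‖f z‖ ≤ C) →
    ip ⇑(A f) ⇑g = ∫ z, φ z * f z * (starRingEnd ℂ) (g z) ∂mT

/-- `A` is a bounded truncated Toeplitz operator on `K_θ` (the class `𝒯(θ)`):
a bounded operator on `K_θ` possessing an `L²` symbol. -/
def IsTTO (θ : ℂ → ℂ) (A : L2T →L[ℂ] L2T) : Prop :=
  OpOnK θ A ∧ ∃ φ : ℂ → ℂ, MemLp φ 2 mT ∧ IsSymbolOf θ A φ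

/-- `A` admits a bounded symbol `φ ∈ L^∞`. -/
def HasBoundedSymbol (θ : ℂ → ℂ) (A : L2T →L[ℂ] L2T) : Prop :=
  ∃ φ : ℂ → ℂ, MemLp φ ⊤ mT ∧ IsSymbolOf θ A φ

/-- The Cauchy integral extension of a boundary function to the disk:
for `f ∈ H^1` and `|w| < 1` this recovers the value at `w` of the analytic extension. -/
def cauchyExt (f : ℂ → ℂ) (w : ℂ) : ℂ :=
  ∫ z, f z / (1 - w * (starRingEnd ℂ) z) ∂mT

/-- Extension of a boundary function to the closed disk: inside the open disk take the
analytic (Cauchy integral) extension; elsewhere keep the boundary values. -/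
def diskExt (f : ℂ → ℂ) : ℂ → ℂ :=
  fun w => if w ∈ Metric.ball (0 : ℂ) 1 then cauchyExt f w else f w

/-- The class `D_p(θ)` (for positive measures): finite Borel measures on the closed unit
disk for which the embedding `K_θ^p ⊂ L^p(μ)` is bounded, the bound being imposed on the
dense subset of functions of `K_θ^p` continuous up to the boundary. -/
def MemD (p : ENNReal) (θ : ℂ → ℂ) (μ : MeasureTheory.Measure ℂ) : Prop :=
  MeasureTheory.IsFiniteMeasure μ ∧ μ (Metric.closedBall (0 : ℂ) 1)ᶜ = 0 ∧
    ∃ C : ℝ, 0 ≤ C ∧ ∀ f : ℂ → ℂ, MemK p θ f → ContinuousOn f sphere1 →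
      eLpNorm (diskExt f) p μ ≤ ENNReal.ofReal C * eLpNorm f p mT

/-- The class `C_p(θ)` (for positive measures): measures of `D_p(θ)` supported on the
unit circle. -/
def MemC (p : ENNReal) (θ : ℂ → ℂ) (μ : MeasureTheory.Measure ℂ) : Prop :=
  MemD p θ μ ∧ μ sphere1ᶜ = 0

/-- The complex measure `w dν` (given by its total variation `ν` and a density `w`)
is a quasisymbol of `A`: `(A f, g) = ∫ f ḡ w dν` for all `f, g ∈ K_θ` continuous
up to the boundary. -/
def IsQuasisymbolOf (θ : ℂ → ℂ) (A : L2T →L[ℂ] L2T) (ν : MeasureTheory.Measure ℂ)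
    (w : ℂ → ℂ) : Prop :=
  ∀ f g : L2T, f ∈ Kset θ → g ∈ Kset θ →
    ∀ fc gc : ℂ → ℂ, ContinuousOn fc sphere1 → ContinuousOn gc sphere1 →
      (⇑f =ᵐ[mT] fc) → (⇑g =ᵐ[mT] gc) →
      ip ⇑(A f) ⇑g = ∫ z, fc z * (starRingEnd ℂ) (gc z) * w z ∂ν

/-- `opFormF A f g = (A f, g)`, where the elements `f, g` of `K_θ` are given as boundary
functions and `A f` is computed through the `L²` class of `f`. -/
def opFormF (A : L2T →L[ℂ] L2T) (f g : ℂ → ℂ) : ℂ :=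
  if hf : MemLp f 2 mT then ip ⇑(A (MemLp.toLp f hf)) g else 0

/-- A representation of `f` as `∑_k x_k ȳ_k` with `x_k, y_k ∈ K_θ` and
`∑_k ‖x_k‖₂·‖y_k‖₂ < ∞`, witnessing that `f` belongs to the space `X`. -/
structure XRep (θ : ℂ → ℂ) (f : ℂ → ℂ) (x y : ℕ → ℂ → ℂ) : Prop where
  memx : ∀ k, MemK 2 θ (x k)
  memy : ∀ k, MemK 2 θ (y k)
  sum : Summable fun k => norm2 (x k) * norm2 (y k)
  repr : ∀ᵐ z ∂mT, f z = ∑' k, x k z * (starRingEnd ℂ) (y k z)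

/-- Membership in the space `X = {∑_k x_k ȳ_k}`. -/
def MemX (θ : ℂ → ℂ) (f : ℂ → ℂ) : Prop := ∃ x y, XRep θ f x y

/-- The norm of the space `X`: the infimum of `∑_k ‖x_k‖₂·‖y_k‖₂` over all
representations. -/
def XNorm (θ : ℂ → ℂ) (f : ℂ → ℂ) : ℝ :=
  sInf {c | ∃ x y, XRep θ f x y ∧ (∑' k, norm2 (x k) * norm2 (y k)) = c}

open ComplexConjugate
open scoped ComplexOrder

lemma Real.sqrt_div_mul_self {a b : ℝ} (ha : 0 ≤ a) (hb : 0 ≤ b) : √(b / a) * a = √(a * b) := by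
  rcases ha.eq_or_lt with rfl | ha
  · simp
  calc √(b / a) * a = √(b / a) * √(a ^ 2) := by rw [Real.sqrt_sq ha.le]
    _ = √(b / a * a ^ 2) := (Real.sqrt_mul (div_nonneg hb ha.le) _).symm
    _ = √(a * b) := by congr 1; field_simp


section Series

variable {α E : Type*} [MeasurableSpace α] {μ : Measure α} [NormedAddCommGroup E]

lemma eLpNorm_one_tsum_le {F : ℕ → α → E} (hF : ∀ k, AEStronglyMeasurable (F k) μ) :
    eLpNorm (fun a => ∑' k, F k a) 1 μ ≤ ∑' k, eLpNorm (F k) 1 μ := by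
  simp only [eLpNorm_one_eq_lintegral_enorm]
  calc ∫⁻ a, ‖∑' k, F k a‖ₑ ∂μ ≤ ∫⁻ a, ∑' k, ‖F k a‖ₑ ∂μ :=
        lintegral_mono fun a => enorm_tsum_le_tsum_enorm
    _ = ∑' k, ∫⁻ a, ‖F k a‖ₑ ∂μ := lintegral_tsum fun k => (hF k).enorm

lemma integrable_tsum_of_tsum_eLpNorm_ne_top [CompleteSpace E] {F : ℕ → α → E}
    (hF : ∀ k, AEStronglyMeasurable (F k) μ) (h : ∑' k, eLpNorm (F k) 1 μ ≠ ⊤) :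
    Integrable (fun a => ∑' k, F k a) μ :=
  memLp_one_iff_integrable.1
    ⟨AEStronglyMeasurable.tsum hF, (eLpNorm_one_tsum_le hF).trans_lt h.lt_top⟩

lemma hasSum_integral_of_tsum_eLpNorm_ne_top [NormedSpace ℝ E] [CompleteSpace E] {F : ℕ → α → E}
    (hF : ∀ k, AEStronglyMeasurable (F k) μ) (h : ∑' k, eLpNorm (F k) 1 μ ≠ ⊤) :
    HasSum (fun k => ∫ a, F k a ∂μ) (∫ a, ∑' k, F k a ∂μ) := by
  simp only [eLpNorm_one_eq_lintegral_enorm] at h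
  rw [integral_tsum hF h]
  refine (Summable.of_norm_bounded (ENNReal.summable_toReal h) fun k => ?_).hasSum
  rw [← integral_norm_eq_lintegral_enorm (hF k)]
  exact norm_integral_le_integral_norm _

end Series

lemma eLpNorm_mul_conj_le {α : Type*} [MeasurableSpace α] {μ : Measure α} {x y : α → ℂ}
    (hx : AEStronglyMeasurable x μ) (hy : AEStronglyMeasurable y μ) :
    eLpNorm (fun a => x a * conj (y a)) 1 μ ≤ eLpNorm x 2 μ * eLpNorm y 2 μ := by
  have := eLpNorm_smul_le_mul_eLpNorm (p := 2) (q := 2) (r := 1) hy.star hx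
  rwa [eLpNorm_star] at this

section Extremal

variable {α : Type*} [MeasurableSpace α] {μ : Measure α} {f : α → ℂ} {c : ℂ}

lemma re_conj_mul_integral_le (hc : ‖c‖ = 1) :
    (conj c * ∫ a, f a ∂μ).re ≤ ∫ a, ‖f a‖ ∂μ :=
  (Complex.re_le_norm _).trans <| by
    simpa [hc] using norm_integral_le_integral_norm f

lemma ae_nonneg_of_re_conj_mul_integral_eq (hf : Integrable f μ) (hc : ‖c‖ = 1)
    (h : (conj c * ∫ a, f a ∂μ).re = ∫ a, ‖f a‖ ∂μ) : ∀ᵐ a ∂μ, 0 ≤ conj c * f a := by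
  have hg : Integrable (fun a => conj c * f a) μ := hf.const_mul _
  have hre : Integrable (fun a => (conj c * f a).re) μ := hg.re
  have hgap : ∫ a, (‖conj c * f a‖ - (conj c * f a).re) ∂μ = 0 := by
    have hint_re := integral_re hg
    simp only [RCLike.re_to_complex] at hint_re
    rw [integral_sub hg.norm hre, hint_re, integral_const_mul]
    simp [hc, h]
  have hae := (integral_eq_zero_iff_of_nonneg (fun a => sub_nonneg.2 (Complex.re_le_norm _))
    (hg.norm.sub hre)).1 hgap
  filter_upwards [hae] with a ha
  exact Complex.re_eq_norm.1 (sub_eq_zero.1 ha).symm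

end Extremal

instance : IsFiniteMeasure mT :=
  Measure.smul_finite _ ENNReal.ofReal_ne_top

lemma ae_norm_eq_one_mT : ∀ᵐ z ∂mT, ‖z‖ = 1 := by
  unfold mT
  refine Measure.ae_smul_measure ?_ _
  rw [ae_map_iff (by fun_prop : Measurable fun t : ℝ => exp (t * I)).aemeasurable
    (measurableSet_eq_fun measurable_norm measurable_const)]
  exact Eventually.of_forall fun t => norm_exp_ofReal_mul_I t

lemma integrable_mul_pow {f : ℂ → ℂ} (hf : Integrable f mT) (n : ℕ) :
    Integrable (fun z => f z * z ^ n) mT :=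
  hf.congr' (by fun_prop) <| by
    filter_upwards [ae_norm_eq_one_mT] with z hz
    simp [hz]

lemma IsInner.integrable_mul_conj {θ f : ℂ → ℂ} (hθ : IsInner θ) (hf : Integrable f mT) :
    Integrable (fun z => θ z * conj (z * f z)) mT :=
  hf.congr' (hθ.meas.mul (by fun_prop)) <| by
    filter_upwards [ae_norm_eq_one_mT, hθ.unimod] with z hz hθz
    simp [hz, hθz]

lemma NegCoeffVanish.add {f g : ℂ → ℂ} (hf : NegCoeffVanish f) (hg : NegCoeffVanish g)
    (hfi : Integrable f mT) (hgi : Integrable g mT) : NegCoeffVanish (fun z => f z + g z) := by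
  intro n hn
  simp only [add_mul]
  rw [integral_add (integrable_mul_pow hfi n) (integrable_mul_pow hgi n), hf n hn, hg n hn,
    add_zero]

lemma NegCoeffVanish.const_mul {f : ℂ → ℂ} (hf : NegCoeffVanish f) (c : ℂ) :
    NegCoeffVanish (fun z => c * f z) := by
  intro n hn
  simp only [mul_assoc]
  rw [integral_const_mul, hf n hn, mul_zero]

lemma MemK.const_mul {θ f : ℂ → ℂ} (hf : MemK 2 θ f) (c : ℂ) : MemK 2 θ (fun z => c * f z) := by
  obtain ⟨hL, hH, hH'⟩ := hf
  refine ⟨hL.const_mul c, hH.const_mul c, ?_⟩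
  convert hH'.const_mul (conj c) using 2 with z
  simp only [map_mul]; ring

lemma MemK.add {θ f g : ℂ → ℂ} (hθ : IsInner θ) (hf : MemK 2 θ f) (hg : MemK 2 θ g) :
    MemK 2 θ (fun z => f z + g z) := by
  obtain ⟨hfL, hfH, hfH'⟩ := hf
  obtain ⟨hgL, hgH, hgH'⟩ := hg
  have hfi := hfL.integrable one_le_two
  have hgi := hgL.integrable one_le_two
  refine ⟨hfL.add hgL, hfH.add hgH hfi hgi, ?_⟩
  convert hfH'.add hgH' (hθ.integrable_mul_conj hfi) (hθ.integrable_mul_conj hgi) using 2 with z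
  simp only [mul_add, map_add]

lemma norm2_nonneg (f : ℂ → ℂ) : 0 ≤ norm2 f := ENNReal.toReal_nonneg

lemma ofReal_norm2 {f : ℂ → ℂ} (hf : MemLp f 2 mT) : ENNReal.ofReal (norm2 f) = eLpNorm f 2 mT :=
  ENNReal.ofReal_toReal hf.eLpNorm_ne_top

lemma norm2_const_mul (c : ℂ) (f : ℂ → ℂ) : norm2 (fun z => c * f z) = ‖c‖ * norm2 f := by
  rw [norm2, show (fun z => c * f z) = c • f from rfl, eLpNorm_const_smul, ENNReal.toReal_mul]
  simp [norm2]

lemma ae_eq_zero_of_norm2_eq_zero {f : ℂ → ℂ} (hf : MemLp f 2 mT) (h : norm2 f = 0) :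
    f =ᵐ[mT] 0 :=
  (eLpNorm_eq_zero_iff hf.1 two_ne_zero).1 <|
    ((ENNReal.toReal_eq_zero_iff _).1 h).resolve_right hf.eLpNorm_ne_top

namespace XRep

variable {θ f : ℂ → ℂ} {x y : ℕ → ℂ → ℂ}

lemma aestronglyMeasurable_mul_conj (hr : XRep θ f x y) (k : ℕ) :
    AEStronglyMeasurable (fun z => x k z * conj (y k z)) mT :=
  (hr.memx k).1.1.mul (hr.memy k).1.1.star

lemma cost_nonneg (x y : ℕ → ℂ → ℂ) : 0 ≤ ∑' k, norm2 (x k) * norm2 (y k) :=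
  tsum_nonneg fun _ => mul_nonneg (norm2_nonneg _) (norm2_nonneg _)

lemma tsum_eLpNorm_le (hr : XRep θ f x y) :
    ∑' k, eLpNorm (fun z => x k z * conj (y k z)) 1 mT
      ≤ ENNReal.ofReal (∑' k, norm2 (x k) * norm2 (y k)) := by
  rw [ENNReal.ofReal_tsum_of_nonneg (fun _ => mul_nonneg (norm2_nonneg _) (norm2_nonneg _)) hr.sum]
  refine ENNReal.tsum_le_tsum fun k => ?_
  rw [ENNReal.ofReal_mul (norm2_nonneg _), ofReal_norm2 (hr.memx k).1, ofReal_norm2 (hr.memy k).1]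
  exact eLpNorm_mul_conj_le (hr.memx k).1.1 (hr.memy k).1.1

lemma tsum_eLpNorm_ne_top (hr : XRep θ f x y) :
    ∑' k, eLpNorm (fun z => x k z * conj (y k z)) 1 mT ≠ ⊤ :=
  (hr.tsum_eLpNorm_le.trans_lt ENNReal.ofReal_lt_top).ne

lemma ae_summable (hr : XRep θ f x y) : ∀ᵐ z ∂mT, Summable fun k => x k z * conj (y k z) := by
  filter_upwards [summable_norm_of_tsum_eLpNorm_ne_top le_rfl hr.aestronglyMeasurable_mul_conj
    hr.tsum_eLpNorm_ne_top] with z hz using hz.of_norm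

lemma integrable (hr : XRep θ f x y) : Integrable f mT :=
  (integrable_tsum_of_tsum_eLpNorm_ne_top hr.aestronglyMeasurable_mul_conj
    hr.tsum_eLpNorm_ne_top).congr (Filter.EventuallyEq.symm hr.repr)

lemma integral_norm_le (hr : XRep θ f x y) :
    ∫ z, ‖f z‖ ∂mT ≤ ∑' k, norm2 (x k) * norm2 (y k) := by
  rw [integral_norm_eq_lintegral_enorm hr.integrable.1, ← eLpNorm_one_eq_lintegral_enorm,
    eLpNorm_congr_ae hr.repr]
  exact ENNReal.toReal_le_of_le_ofReal (cost_nonneg x y)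
    ((eLpNorm_one_tsum_le hr.aestronglyMeasurable_mul_conj).trans hr.tsum_eLpNorm_le)

lemma hasSum_ip (hr : XRep θ f x y) : HasSum (fun k => ip (x k) (y k)) (∫ z, f z ∂mT) := by
  rw [integral_congr_ae hr.repr]
  exact hasSum_integral_of_tsum_eLpNorm_ne_top hr.aestronglyMeasurable_mul_conj
    hr.tsum_eLpNorm_ne_top

lemma const_mul (hr : XRep θ f x y) (c : ℂ) :
    XRep θ (fun z => c * f z) (fun k z => c * x k z) y := by
  refine ⟨fun k => (hr.memx k).const_mul c, hr.memy, ?_, ?_⟩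
  · simpa only [norm2_const_mul, mul_assoc] using hr.sum.mul_left ‖c‖
  · filter_upwards [hr.repr] with z hz
    rw [hz, ← tsum_mul_left]
    simp only [mul_assoc]

lemma XNorm_le (hr : XRep θ f x y) : XNorm θ f ≤ ∑' k, norm2 (x k) * norm2 (y k) :=
  csInf_le ⟨0, by rintro _ ⟨x, y, -, rfl⟩; exact cost_nonneg x y⟩ ⟨x, y, hr, rfl⟩

end XRep
namespace XRep

variable {θ f : ℂ → ℂ} {x y : ℕ → ℂ → ℂ}

/-- Rescale `x_k ↦ t_k x_k`, `y_k ↦ t_k⁻¹ y_k` with `t_k = √(‖y_k‖₂ / ‖x_k‖₂)`. When `x_k` or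
`y_k` vanishes in `L²`, the junk values `√(b / 0) = 0 = 0⁻¹` make both new factors zero. -/
lemma exists_balanced (hr : XRep θ f x y) :
    ∃ x' y' : ℕ → ℂ → ℂ, XRep θ f x' y' ∧ (∀ k, norm2 (x' k) = norm2 (y' k)) ∧
      ∑' k, norm2 (x' k) * norm2 (y' k) = ∑' k, norm2 (x k) * norm2 (y k) := by
  set t : ℕ → ℝ := fun k => √(norm2 (y k) / norm2 (x k))
  have ha k := norm2_nonneg (x k)
  have hb k := norm2_nonneg (y k)
  have hx' k : norm2 (fun z => (t k : ℂ) * x k z) = √(norm2 (x k) * norm2 (y k)) := by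
    rw [norm2_const_mul, Complex.norm_real, Real.norm_of_nonneg (Real.sqrt_nonneg _),
      Real.sqrt_div_mul_self (ha k) (hb k)]
  have hy' k : norm2 (fun z => ((t k)⁻¹ : ℂ) * y k z) = √(norm2 (x k) * norm2 (y k)) := by
    rw [norm2_const_mul, ← Complex.ofReal_inv, Complex.norm_real, Real.norm_of_nonneg
      (inv_nonneg.2 (Real.sqrt_nonneg _)), ← Real.sqrt_inv, inv_div,
      Real.sqrt_div_mul_self (hb k) (ha k), mul_comm]
  have hcost k : √(norm2 (x k) * norm2 (y k)) * √(norm2 (x k) * norm2 (y k))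
      = norm2 (x k) * norm2 (y k) := Real.mul_self_sqrt (mul_nonneg (ha k) (hb k))
  have hprod : ∀ᵐ z ∂mT, ∀ k, (t k : ℂ) * x k z * conj (((t k)⁻¹ : ℂ) * y k z)
      = x k z * conj (y k z) := by
    refine ae_all_iff.2 fun k => ?_
    by_cases ht : t k = 0
    · rcases div_eq_zero_iff.1 ((Real.sqrt_eq_zero'.1 ht).antisymm (div_nonneg (hb k) (ha k)))
        with h | h
      · filter_upwards [ae_eq_zero_of_norm2_eq_zero (hr.memy k).1 h] with z hz
        simp [hz]
      · filter_upwards [ae_eq_zero_of_norm2_eq_zero (hr.memx k).1 h] with z hz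
        simp [hz]
    · refine Eventually.of_forall fun z => ?_
      rw [map_mul, ← Complex.ofReal_inv, Complex.conj_ofReal, mul_mul_mul_comm,
        ← Complex.ofReal_mul, mul_inv_cancel₀ ht, Complex.ofReal_one, one_mul]
  refine ⟨fun k z => (t k : ℂ) * x k z, fun k z => ((t k)⁻¹ : ℂ) * y k z,
    ⟨fun k => (hr.memx k).const_mul _, fun k => (hr.memy k).const_mul _, ?_, ?_⟩,
    fun k => by rw [hx', hy'], ?_⟩
  · simpa only [hx', hy', hcost] using hr.sum
  · filter_upwards [hr.repr, hprod] with z hz hz'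
    rw [hz]
    exact tsum_congr fun k => (hz' k).symm
  · simp only [hx', hy', hcost]

end XRep

namespace MemX

variable {θ f : ℂ → ℂ}

lemma integrable (hf : MemX θ f) : Integrable f mT :=
  let ⟨_, _, hr⟩ := hf
  hr.integrable

lemma const_mul (hf : MemX θ f) (c : ℂ) : MemX θ (fun z => c * f z) :=
  let ⟨_, _, hr⟩ := hf
  ⟨_, _, hr.const_mul c⟩

lemma integral_norm_le_XNorm (hf : MemX θ f) : ∫ z, ‖f z‖ ∂mT ≤ XNorm θ f := by
  obtain ⟨x, y, hr⟩ := hf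
  exact le_csInf ⟨_, x, y, hr, rfl⟩ fun _ ⟨_, _, hr', hs⟩ => hs ▸ hr'.integral_norm_le

lemma XNorm_const_mul_le (hf : MemX θ f) {c : ℂ} (hc : ‖c‖ ≤ 1) :
    XNorm θ (fun z => c * f z) ≤ XNorm θ f := by
  obtain ⟨x, y, hr⟩ := hf
  refine le_csInf ⟨_, x, y, hr, rfl⟩ fun _ ⟨x', y', hr', hs⟩ => hs ▸ ?_
  refine (hr'.const_mul c).XNorm_le.trans ?_
  simp only [norm2_const_mul, mul_assoc, tsum_mul_left]
  exact mul_le_of_le_one_left (XRep.cost_nonneg x' y') hc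

lemma exists_balanced_XRep_lt (hf : MemX θ f) {δ : ℝ} (hδ : 0 < δ) :
    ∃ x y : ℕ → ℂ → ℂ, XRep θ f x y ∧ (∀ k, norm2 (x k) = norm2 (y k)) ∧
      ∑' k, norm2 (x k) * norm2 (y k) < XNorm θ f + δ := by
  obtain ⟨x₀, y₀, hr₀⟩ := hf
  obtain ⟨_, ⟨x₁, y₁, hr₁, rfl⟩, hlt⟩ :=
    Real.lt_sInf_add_pos (s := {c | ∃ x y, XRep θ f x y ∧ ∑' k, norm2 (x k) * norm2 (y k) = c})
      ⟨_, x₀, y₀, hr₀, rfl⟩ hδ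
  obtain ⟨x, y, hr, hbal, hcost⟩ := hr₁.exists_balanced
  exact ⟨x, y, hr, hbal, hcost ▸ hlt⟩

end MemX

def fourthRoots : Finset ℂ := {1, -1, I, -I}

lemma norm_eq_one_of_mem_fourthRoots {c : ℂ} (hc : c ∈ fourthRoots) : ‖c‖ = 1 := by
  simp only [fourthRoots, Finset.mem_insert, Finset.mem_singleton] at hc
  rcases hc with rfl | rfl | rfl | rfl <;> simp

lemma sum_fourthRoots {M : Type*} [AddCommMonoid M] (g : ℂ → M) :
    ∑ c ∈ fourthRoots, g c = g 1 + g (-1) + g I + g (-I) := by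
  rw [fourthRoots, Finset.sum_insert, Finset.sum_insert, Finset.sum_pair] <;>
    norm_num [Complex.ext_iff, add_assoc]

lemma mul_conj_eq_sum_fourthRoots (a b : ℂ) :
    a * conj b = ∑ c ∈ fourthRoots, c * (2⁻¹ * (a + c * b) * conj (2⁻¹ * (a + c * b))) := by
  rw [sum_fourthRoots]
  simp only [map_mul, map_add, map_neg, map_one, Complex.conj_I, map_inv₀, map_ofNat]
  ring_nf
  simp only [Complex.I_sq]
  ring

lemma norm2_add_mul_sq {x y : ℂ → ℂ} (hx : MemLp x 2 mT) (hy : MemLp y 2 mT) (c : ℂ) :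
    norm2 (fun z => x z + c * y z) ^ 2
      = norm2 x ^ 2 + ‖c‖ ^ 2 * norm2 y ^ 2 + 2 * (conj c * ip x y).re := by
  have hinner : inner ℂ (hx.toLp x) (hy.toLp y) = conj (ip x y) := by
    rw [L2.inner_def, ip, ← integral_conj]
    refine integral_congr_ae ?_
    filter_upwards [hx.coeFn_toLp, hy.coeFn_toLp] with z hxz hyz
    simp [hxz, hyz, mul_comm]
  have hnorm : norm2 (fun z => x z + c * y z) = ‖hx.toLp x + c • hy.toLp y‖ := by
    rw [← MemLp.toLp_const_smul, ← MemLp.toLp_add, Lp.norm_toLp]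
    rfl
  rw [hnorm, norm_add_sq (𝕜 := ℂ), norm_smul, inner_smul_right, hinner, Lp.norm_toLp,
    Lp.norm_toLp]
  simp only [norm2, RCLike.re_to_complex, Complex.mul_re, Complex.conj_re, Complex.conj_im]
  ring

def polarVec (c : ℂ) (x y : ℂ → ℂ) : ℂ → ℂ := fun z => 2⁻¹ * (x z + c * y z)

def polarPart (c : ℂ) (x y : ℕ → ℂ → ℂ) : ℂ → ℂ :=
  fun z => ∑' k, polarVec c (x k) (y k) z * conj (polarVec c (x k) (y k) z)

lemma polarPart_nonneg (c : ℂ) (x y : ℕ → ℂ → ℂ) (z : ℂ) : 0 ≤ polarPart c x y z :=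
  tsum_nonneg fun _ => mul_star_self_nonneg _

lemma MemK.polarVec {θ x y : ℂ → ℂ} (hθ : IsInner θ) (hx : MemK 2 θ x) (hy : MemK 2 θ y)
    (c : ℂ) : MemK 2 θ (polarVec c x y) :=
  (hx.add hθ (hy.const_mul c)).const_mul 2⁻¹

lemma norm2_polarVec_mul_self {x y : ℂ → ℂ} (hx : MemLp x 2 mT) (hy : MemLp y 2 mT)
    (hxy : norm2 x = norm2 y) {c : ℂ} (hc : ‖c‖ = 1) :
    norm2 (polarVec c x y) * norm2 (polarVec c x y)
      = (norm2 x * norm2 y + (conj c * ip x y).re) / 2 := by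
  have h := norm2_add_mul_sq hx hy c
  rw [hc, hxy] at h
  unfold polarVec
  rw [norm2_const_mul, hxy, norm_inv, Complex.norm_ofNat]
  linear_combination h / 4

namespace XRep

variable {θ f : ℂ → ℂ} {x y : ℕ → ℂ → ℂ}

lemma hasSum_norm2_polarVec (hr : XRep θ f x y) (hbal : ∀ k, norm2 (x k) = norm2 (y k))
    {c : ℂ} (hc : ‖c‖ = 1) :
    HasSum (fun k => norm2 (polarVec c (x k) (y k)) * norm2 (polarVec c (x k) (y k)))
      ((∑' k, norm2 (x k) * norm2 (y k) + (conj c * ∫ z, f z ∂mT).re) / 2) := by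
  simp only [norm2_polarVec_mul_self (hr.memx _).1 (hr.memy _).1 (hbal _) hc]
  exact (hr.sum.hasSum.add (Complex.hasSum_re (hr.hasSum_ip.mul_left (conj c)))).div_const 2

lemma polar (hθ : IsInner θ) (hr : XRep θ f x y) (hbal : ∀ k, norm2 (x k) = norm2 (y k))
    {c : ℂ} (hc : ‖c‖ = 1) :
    XRep θ (polarPart c x y) (fun k => polarVec c (x k) (y k)) (fun k => polarVec c (x k) (y k)) :=
  have hmem k := (hr.memx k).polarVec hθ (hr.memy k) c
  ⟨hmem, hmem, (hr.hasSum_norm2_polarVec hbal hc).summable, ae_of_all _ fun _ => rfl⟩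

lemma XNorm_polarPart_le (hθ : IsInner θ) (hr : XRep θ f x y)
    (hbal : ∀ k, norm2 (x k) = norm2 (y k)) {c : ℂ} (hc : ‖c‖ = 1) :
    XNorm θ (polarPart c x y)
      ≤ (∑' k, norm2 (x k) * norm2 (y k) + (conj c * ∫ z, f z ∂mT).re) / 2 :=
  (hr.polar hθ hbal hc).XNorm_le.trans_eq (hr.hasSum_norm2_polarVec hbal hc).tsum_eq

lemma ae_eq_sum_polarPart (hθ : IsInner θ) (hr : XRep θ f x y)
    (hbal : ∀ k, norm2 (x k) = norm2 (y k)) :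
    f =ᵐ[mT] fun z => ∑ c ∈ fourthRoots, c * polarPart c x y z := by
  have hsum : ∀ᵐ z ∂mT, ∀ c ∈ fourthRoots,
      Summable fun k => polarVec c (x k) (y k) z * conj (polarVec c (x k) (y k) z) :=
    (eventually_all_finset _).2 fun c hc =>
      (hr.polar hθ hbal (norm_eq_one_of_mem_fourthRoots hc)).ae_summable
  filter_upwards [hr.repr, hsum] with z hz hsum
  simp only [polarPart, polarVec] at hsum ⊢
  rw [hz, tsum_congr fun k => mul_conj_eq_sum_fourthRoots (x k z) (y k z),
    Summable.tsum_finsetSum fun c hc => (hsum c hc).mul_left c]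
  simp only [tsum_mul_left]

end XRep


def IsNonnegDecomposition (θ f : ℂ → ℂ) (F : ℂ → ℂ → ℂ) : Prop :=
  (∀ c ∈ fourthRoots, MemX θ (F c) ∧ (∀ᵐ z ∂mT, 0 ≤ F c z) ∧ XNorm θ (F c) ≤ XNorm θ f) ∧
    f =ᵐ[mT] fun z => ∑ c ∈ fourthRoots, c * F c z

namespace MemX

variable {θ f : ℂ → ℂ}

lemma exists_isNonnegDecomposition_of_ae_nonneg (hf : MemX θ f) {c : ℂ}
    (hc : c ∈ fourthRoots) (h : ∀ᵐ z ∂mT, 0 ≤ conj c * f z) :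
    ∃ F, IsNonnegDecomposition θ f F := by
  have hc1 := norm_eq_one_of_mem_fourthRoots hc
  refine ⟨fun c' z => (if c' = c then conj c else 0) * f z, fun c' _ => ⟨hf.const_mul _,
    ?_, hf.XNorm_const_mul_le ?_⟩, ae_of_all _ fun z => ?_⟩
  · dsimp only
    split_ifs
    · exact h
    · simp
  · split_ifs <;> simp [hc1]
  · simp [Finset.sum_ite_eq', hc, ← mul_assoc, Complex.mul_conj, Complex.normSq_eq_norm_sq, hc1]

lemma exists_isNonnegDecomposition_of_re_lt (hθ : IsInner θ) (hf : MemX θ f)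
    (h : ∀ c ∈ fourthRoots, (conj c * ∫ z, f z ∂mT).re < ∫ z, ‖f z‖ ∂mT) :
    ∃ F, IsNonnegDecomposition θ f F := by
  set gap : ℂ → ℝ := fun c => ∫ z, ‖f z‖ ∂mT - (conj c * ∫ z, f z ∂mT).re
  have hne : fourthRoots.Nonempty := ⟨1, by simp [fourthRoots]⟩
  have hδ : 0 < fourthRoots.inf' hne gap :=
    (Finset.lt_inf'_iff hne).2 fun c hc => sub_pos.2 (h c hc)
  obtain ⟨x, y, hr, hbal, hcost⟩ := hf.exists_balanced_XRep_lt hδ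
  refine ⟨fun c => polarPart c x y, fun c hc => ?_, hr.ae_eq_sum_polarPart hθ hbal⟩
  have hc1 := norm_eq_one_of_mem_fourthRoots hc
  refine ⟨⟨_, _, hr.polar hθ hbal hc1⟩, ae_of_all _ (polarPart_nonneg c x y), ?_⟩
  have hgap : fourthRoots.inf' hne gap ≤ gap c := Finset.inf'_le _ hc
  linarith [hr.XNorm_polarPart_le hθ hbal hc1, hf.integral_norm_le_XNorm]

theorem exists_isNonnegDecomposition (hθ : IsInner θ) (hf : MemX θ f) :
    ∃ F, IsNonnegDecomposition θ f F := by
  by_cases h : ∃ c ∈ fourthRoots, (conj c * ∫ z, f z ∂mT).re = ∫ z, ‖f z‖ ∂mT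
  · obtain ⟨c, hc, heq⟩ := h
    exact hf.exists_isNonnegDecomposition_of_ae_nonneg hc
      (ae_nonneg_of_re_conj_mul_integral_eq hf.integrable (norm_eq_one_of_mem_fourthRoots hc) heq)
  · exact exists_isNonnegDecomposition_of_re_lt hθ hf fun c hc =>
      (re_conj_mul_integral_le (norm_eq_one_of_mem_fourthRoots hc)).lt_of_ne fun heq =>
        h ⟨c, hc, heq⟩

end MemX

/-- **Proposition.** Any element `f` of `X` is a linear combination
`f = f₁ − f₂ + i f₃ − i f₄` of four nonnegative elements of `X`, each of `X`-norm at
most `‖f‖_X`. -/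
theorem X_decomposition_four_nonneg (θ : ℂ → ℂ) (hθ : IsInner θ)
    (f : ℂ → ℂ) (hf : MemX θ f) :
    ∃ f₁ f₂ f₃ f₄ : ℂ → ℂ,
      (MemX θ f₁ ∧ MemX θ f₂ ∧ MemX θ f₃ ∧ MemX θ f₄) ∧
      ((∀ᵐ z ∂mT, (f₁ z).im = 0 ∧ 0 ≤ (f₁ z).re) ∧
       (∀ᵐ z ∂mT, (f₂ z).im = 0 ∧ 0 ≤ (f₂ z).re) ∧
       (∀ᵐ z ∂mT, (f₃ z).im = 0 ∧ 0 ≤ (f₃ z).re) ∧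
       (∀ᵐ z ∂mT, (f₄ z).im = 0 ∧ 0 ≤ (f₄ z).re)) ∧
      (XNorm θ f₁ ≤ XNorm θ f ∧ XNorm θ f₂ ≤ XNorm θ f ∧
       XNorm θ f₃ ≤ XNorm θ f ∧ XNorm θ f₄ ≤ XNorm θ f) ∧
      (∀ᵐ z ∂mT, f z = f₁ z - f₂ z + Complex.I * f₃ z - Complex.I * f₄ z) := by
  obtain ⟨F, hF, hsum⟩ := hf.exists_isNonnegDecomposition hθ
  have hF' : ∀ c ∈ fourthRoots, MemX θ (F c) ∧
      (∀ᵐ z ∂mT, (F c z).im = 0 ∧ 0 ≤ (F c z).re) ∧ XNorm θ (F c) ≤ XNorm θ f := by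
    intro c hc
    obtain ⟨hm, hpos, hn⟩ := hF c hc
    exact ⟨hm, hpos.mono fun z hz => ⟨(nonneg_iff.1 hz).2.symm, (nonneg_iff.1 hz).1⟩, hn⟩
  obtain ⟨m₁, p₁, n₁⟩ := hF' 1 (by simp [fourthRoots])
  obtain ⟨m₂, p₂, n₂⟩ := hF' (-1) (by simp [fourthRoots])
  obtain ⟨m₃, p₃, n₃⟩ := hF' I (by simp [fourthRoots])
  obtain ⟨m₄, p₄, n₄⟩ := hF' (-I) (by simp [fourthRoots])
  refine ⟨F 1, F (-1), F I, F (-I), ⟨m₁, m₂, m₃, m₄⟩, ⟨p₁, p₂, p₃, p₄⟩, ⟨n₁, n₂, n₃, n₄⟩, ?_⟩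
  filter_upwards [hsum] with z hz
  rw [hz, sum_fourthRoots]
  ring
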